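/- Let M be a prime Γ-ring and δ: M → M a left derivation. Then for every a ∈ M, either a lies in the center Z(M) or δ(a) = 0. -/

import Mathlib

/-- A Γ-ring in the sense of Barnes: additive abelian groups `M` and `Γ` with a
triadditive, associative product `M × Γ × M → M`. -/
structure GammaRing (M : Type*) (Γ : Type*) [AddCommGroup M] [AddCommGroup Γ] where
  tri : M → Γ → M → M
  add_left : ∀ (a b : M) (α : Γ) (c : M), tri (a + b) α c = tri a α c + tri b α c
  add_mid : ∀ (a : M) (α β : Γ) (b : M), tri a (α + β) b = tri a α b + tri a β b
  add_right : ∀ (a : M) (α : Γ) (b c : M), tri a α (b + c) = tri a α b + tri a α c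
  assoc : ∀ (a : M) (α : Γ) (b : M) (β : Γ) (c : M),
    tri (tri a α b) β c = tri a α (tri b β c)

namespace GammaRing

variable {M Γ : Type*} [AddCommGroup M] [AddCommGroup Γ]

/-- The commutator `[a,b]_α = aαb - bαa`. -/
def comm (G : GammaRing M Γ) (a : M) (α : Γ) (b : M) : M :=
  G.tri a α b - G.tri b α a

/-- The center `Z(M)`. -/
def center (G : GammaRing M Γ) : Set M :=
  {a | ∀ (b : M) (α : Γ), G.tri a α b = G.tri b α a}

/-- A left derivation: additive with `δ(xαy) = xαδ(y) + yαδ(x)`. -/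
def IsLeftDerivation (G : GammaRing M Γ) (δ : M → M) : Prop :=
  (∀ x y : M, δ (x + y) = δ x + δ y) ∧
  ∀ (x : M) (α : Γ) (y : M), δ (G.tri x α y) = G.tri x α (δ y) + G.tri y α (δ x)

/-- A derivation: additive with `μ(xαy) = μ(x)αy + xαμ(y)`. -/
def IsDerivation (G : GammaRing M Γ) (μ : M → M) : Prop :=
  (∀ x y : M, μ (x + y) = μ x + μ y) ∧
  ∀ (x : M) (α : Γ) (y : M), μ (G.tri x α y) = G.tri (μ x) α y + G.tri x α (μ y)

/-- An endomorphism: additive with `σ(xαy) = σ(x)ασ(y)`. -/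
def IsEndomorphism (G : GammaRing M Γ) (σ : M → M) : Prop :=
  (∀ x y : M, σ (x + y) = σ x + σ y) ∧
  ∀ (x : M) (α : Γ) (y : M), σ (G.tri x α y) = G.tri (σ x) α (σ y)

/-- Semiprime: `aΓMΓa = 0` implies `a = 0`. -/
def IsSemiprime (G : GammaRing M Γ) : Prop :=
  ∀ a : M, (∀ (α : Γ) (m : M) (β : Γ), G.tri (G.tri a α m) β a = 0) → a = 0

/-- Prime: `aΓMΓb = 0` implies `a = 0` or `b = 0`. -/
def IsPrime (G : GammaRing M Γ) : Prop :=
  ∀ a b : M, (∀ (α : Γ) (m : M) (β : Γ), G.tri (G.tri a α m) β b = 0) → a = 0 ∨ b = 0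

/-- Strong commutativity preserving: `[f(x),f(y)]_α = [x,y]_α`. -/
def IsSCP (G : GammaRing M Γ) (f : M → M) : Prop :=
  ∀ (x : M) (α : Γ) (y : M), G.comm (f x) α (f y) = G.comm x α y

end GammaRing

/-!
Expanding `δ((zβx)αy) = δ(zβ(xαy))` in the two possible ways gives an identity
(`IsLeftDerivation.tri_tri_map_add_tri_tri_map`) from which one reads off, for a commutator
`c = [a,x]_β`, both `δ c = 0` and `cγδ(a) = 0`. Feeding `δ c = 0` back into the identity
gives `(cγm)αδ(a) = mγ(cαδ(a)) = 0` for all `m`, so primeness forces `c = 0` or `δ(a) = 0`.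
-/

namespace GammaRing

variable {M Γ : Type*} [AddCommGroup M] [AddCommGroup Γ] (G : GammaRing M Γ)

theorem tri_zero_right (a : M) (α : Γ) : G.tri a α 0 = 0 :=
  (AddMonoidHom.mk' (G.tri a α) (G.add_right a α)).map_zero

theorem tri_sub_left (p q : M) (α : Γ) (r : M) :
    G.tri (p - q) α r = G.tri p α r - G.tri q α r :=
  (AddMonoidHom.mk' (fun p ↦ G.tri p α r) fun p q ↦ G.add_left p q α r).map_sub p q

namespace IsLeftDerivation

variable {G} {δ : M → M}

theorem map_sub (hδ : G.IsLeftDerivation δ) (p q : M) : δ (p - q) = δ p - δ q :=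
  (AddMonoidHom.mk' δ hδ.1).map_sub p q

theorem tri_tri_map_add_tri_tri_map (hδ : G.IsLeftDerivation δ) (x y z : M) (α β : Γ) :
    G.tri z β (G.tri y α (δ x)) + G.tri x α (G.tri y β (δ z)) =
      G.tri y α (G.tri z β (δ x)) + G.tri y α (G.tri x β (δ z)) := by
  have h := congrArg δ (G.assoc z β x α y)
  rw [hδ.2, hδ.2, hδ.2, hδ.2, G.add_right, G.add_right, G.assoc, G.assoc, add_assoc] at h
  exact (add_left_cancel h).symm

theorem tri_tri_map_self_comm (hδ : G.IsLeftDerivation δ) (x z : M) (α β : Γ) :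
    G.tri z β (G.tri x α (δ x)) = G.tri x α (G.tri z β (δ x)) :=
  add_right_cancel (hδ.tri_tri_map_add_tri_tri_map x x z α β)

theorem tri_tri_map_self_swap (hδ : G.IsLeftDerivation δ) (a y : M) (α β : Γ) :
    G.tri a α (G.tri y β (δ a)) = G.tri a β (G.tri y α (δ a)) := by
  have h := hδ.tri_tri_map_add_tri_tri_map a y a α β
  rw [hδ.tri_tri_map_self_comm a y β α] at h
  exact add_left_cancel h

theorem map_comm_eq_zero (hδ : G.IsLeftDerivation δ) (a x : M) (β : Γ) :
    δ (G.comm a β x) = 0 := by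
  rw [comm, hδ.map_sub, hδ.2, hδ.2]
  abel

theorem comm_tri_map_self_eq_zero (hδ : G.IsLeftDerivation δ) (a x : M) (β γ : Γ) :
    G.tri (G.comm a β x) γ (δ a) = 0 := by
  have h₁ : G.tri (G.tri a β x) γ (δ a) = G.tri x γ (G.tri a β (δ a)) := by
    rw [G.assoc, hδ.tri_tri_map_self_comm]
  have h₂ : G.tri (G.tri x β a) γ (δ a) = G.tri x γ (G.tri a β (δ a)) := by
    rw [G.assoc, hδ.tri_tri_map_self_comm a x γ β, hδ.tri_tri_map_self_swap,
      hδ.tri_tri_map_self_comm]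
  rw [comm, tri_sub_left, h₁, h₂, sub_self]

theorem comm_tri_tri_map_self_eq_zero (hδ : G.IsLeftDerivation δ) (a x m : M) (α β γ : Γ) :
    G.tri (G.tri (G.comm a β x) γ m) α (δ a) = 0 := by
  have h := hδ.tri_tri_map_add_tri_tri_map (G.comm a β x) m a γ α
  simp only [hδ.map_comm_eq_zero, tri_zero_right, zero_add] at h
  rw [G.assoc, h, hδ.comm_tri_map_self_eq_zero, tri_zero_right]

end IsLeftDerivation

end GammaRing

/-- In a prime Γ-ring with a left derivation `δ`, every element is central
or is killed by `δ`. -/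
theorem prime_left_derivation_central_or_zero {M Γ : Type*}
    [AddCommGroup M] [AddCommGroup Γ] (G : GammaRing M Γ) (hp : G.IsPrime)
    (δ : M → M) (hδ : G.IsLeftDerivation δ) :
    ∀ a : M, a ∈ G.center ∨ δ a = 0 := by
  intro a
  refine or_iff_not_imp_right.mpr fun hδa b α ↦ sub_eq_zero.mp ?_
  exact (hp _ _ fun γ m β ↦ hδ.comm_tri_tri_map_self_eq_zero a b m β α γ).resolve_right hδa
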